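/- arXiv:math/0703065 — 3 statements merged into one kernel-verified Lean document; each statement's English description precedes it below -/
import Mathlib

section
/- Let G be a group generated by elements x, y, a₁, b₁, a₂, b₂ subject to (at least) the relations [b₁,b₂]=1, [a₁,b₂]=1, [b₁,a₁]=1, [b₂,a₂]=1, [x,a₁]=1, [y,a₁]=1, [x,a₂]=1, [y,a₂]=1. If additionally the relations b₁ = [a₂⁻¹, a₁⁻¹], x = [b₁⁻¹, y⁻¹], a₁ = [x⁻¹, b₁], b₂ = [b₁, a₂], a₂ = [b₂⁻¹, y⁻¹], and y = [x⁻¹, b₂] hold, then G is the trivial group. -/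
/-!
Since `y` and `b₂` commute with `a₁`, so does `a₂ = ⁅b₂⁻¹, y⁻¹⁆`. Hence `b₁ = ⁅a₂⁻¹, a₁⁻¹⁆ = 1`,
and the remaining relations collapse in turn: `b₁ = 1` kills `x`, `a₁` and `b₂`, and `b₂ = 1`
kills `a₂` and `y`.
-/

open scoped commutatorElement

theorem Commute.commutatorElement_right {G : Type*} [Group G] {a b c : G}
    (hb : Commute a b) (hc : Commute a c) : Commute a ⁅b, c⁆ := by
  rw [commutatorElement_def]
  exact ((hb.mul_right hc).mul_right hb.inv_right).mul_right hc.inv_right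

theorem Subgroup.eq_one_of_closure_eq_top {G : Type*} [Group G] {S : Set G}
    (hS : Subgroup.closure S = ⊤) (h1 : S ⊆ {1}) (g : G) : g = 1 := by
  rw [← Subgroup.mem_bot, ← Subgroup.closure_eq_bot_iff.mpr h1, hS]
  exact Subgroup.mem_top g

theorem stmt_4_general {G : Type*} [Group G] (x y a₁ b₁ a₂ b₂ : G)
    (hgen : Subgroup.closure ({x, y, a₁, b₁, a₂, b₂} : Set G) = ⊤)
    (h2 : ⁅a₁, b₂⁆ = 1) (h6 : ⁅y, a₁⁆ = 1)
    (r1 : b₁ = ⁅a₂⁻¹, a₁⁻¹⁆) (r2 : x = ⁅b₁⁻¹, y⁻¹⁆) (r3 : a₁ = ⁅x⁻¹, b₁⁆)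
    (r4 : b₂ = ⁅b₁, a₂⁆) (r5 : a₂ = ⁅b₂⁻¹, y⁻¹⁆) (r6 : y = ⁅x⁻¹, b₂⁆) :
    ∀ g : G, g = 1 := by
  have ha₁b₂ : Commute a₁ b₂ := commutatorElement_eq_one_iff_commute.mp h2
  have ha₁y : Commute a₁ y := (commutatorElement_eq_one_iff_commute.mp h6).symm
  have ha₁a₂ : Commute a₁ a₂ :=
    r5 ▸ ha₁b₂.inv_right.commutatorElement_right ha₁y.inv_right
  have hb₁ : b₁ = 1 := r1 ▸ ha₁a₂.symm.inv_inv.commutator_eq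
  have hx : x = 1 := by rw [r2, hb₁, inv_one, commutatorElement_one_left]
  have ha₁ : a₁ = 1 := by rw [r3, hb₁, commutatorElement_one_right]
  have hb₂ : b₂ = 1 := by rw [r4, hb₁, commutatorElement_one_left]
  have ha₂ : a₂ = 1 := by rw [r5, hb₂, inv_one, commutatorElement_one_left]
  have hy : y = 1 := by rw [r6, hb₂, commutatorElement_one_right]
  refine Subgroup.eq_one_of_closure_eq_top hgen ?_
  simp [hx, hy, ha₁, hb₁, ha₂, hb₂]

theorem stmt_4 {G : Type*} [Group G] (x y a₁ b₁ a₂ b₂ : G)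
    (hgen : Subgroup.closure ({x, y, a₁, b₁, a₂, b₂} : Set G) = ⊤)
    (h1 : ⁅b₁, b₂⁆ = 1) (h2 : ⁅a₁, b₂⁆ = 1) (h3 : ⁅b₁, a₁⁆ = 1) (h4 : ⁅b₂, a₂⁆ = 1)
    (h5 : ⁅x, a₁⁆ = 1) (h6 : ⁅y, a₁⁆ = 1) (h7 : ⁅x, a₂⁆ = 1) (h8 : ⁅y, a₂⁆ = 1)
    (r1 : b₁ = ⁅a₂⁻¹, a₁⁻¹⁆) (r2 : x = ⁅b₁⁻¹, y⁻¹⁆) (r3 : a₁ = ⁅x⁻¹, b₁⁆)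
    (r4 : b₂ = ⁅b₁, a₂⁆) (r5 : a₂ = ⁅b₂⁻¹, y⁻¹⁆) (r6 : y = ⁅x⁻¹, b₂⁆) :
    ∀ g : G, g = 1 :=
  stmt_4_general x y a₁ b₁ a₂ b₂ hgen h2 h6 r1 r2 r3 r4 r5 r6
end

section
/- Let G be a group generated by x, y, a₁, b₁, a₂, b₂ subject to the relations [b₁,b₂]=1, [a₁,b₂]=1, [b₁,a₁]=1, [b₂,a₂]=1, [x,a₁]=1, [y,a₁]=1, [x,a₂]=1, [y,a₂]=1, together with b₁ = [a₂⁻¹,a₁⁻¹], x = [b₁⁻¹,y⁻¹], a₁ = [x⁻¹,b₁], b₂ = [b₁,a₂], and a₂ = [b₂⁻¹,y⁻¹]. Then G is generated by y alone; in particular G is cyclic (a quotient of ℤ). -/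
/-!
Since `a₁` commutes with `b₂` and `y`, it commutes with `a₂ = ⁅b₂⁻¹, y⁻¹⁆`, so
`b₁ = ⁅a₂⁻¹, a₁⁻¹⁆ = 1`. Then `x`, `a₁`, `b₂` are commutators with `b₁`, hence trivial, and
`a₂ = ⁅b₂⁻¹, y⁻¹⁆ = 1`; so of the six generators only `y` survives.
-/

open scoped commutatorElement

theorem Subgroup.closure_eq_top_of_subset_closure {G : Type*} [Group G] {s t : Set G}
    (hs : Subgroup.closure s = ⊤) (hst : s ⊆ Subgroup.closure t) : Subgroup.closure t = ⊤ :=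
  top_le_iff.mp (hs ▸ (Subgroup.closure_le _).mpr hst)

theorem stmt_5_general {G : Type*} [Group G] (x y a₁ b₁ a₂ b₂ : G)
    (hgen : Subgroup.closure ({x, y, a₁, b₁, a₂, b₂} : Set G) = ⊤)
    (h2 : ⁅a₁, b₂⁆ = 1) (h6 : ⁅y, a₁⁆ = 1)
    (r1 : b₁ = ⁅a₂⁻¹, a₁⁻¹⁆) (r2 : x = ⁅b₁⁻¹, y⁻¹⁆) (r3 : a₁ = ⁅x⁻¹, b₁⁆)
    (r4 : b₂ = ⁅b₁, a₂⁆) (r5 : a₂ = ⁅b₂⁻¹, y⁻¹⁆) :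
    Subgroup.closure ({y} : Set G) = ⊤ := by
  have ha₁b₂ : Commute a₁ b₂ := commutatorElement_eq_one_iff_commute.mp h2
  have ha₁y : Commute a₁ y := (commutatorElement_eq_one_iff_commute.mp h6).symm
  have ha₁a₂ : Commute a₁ a₂ := r5 ▸ ha₁b₂.inv_right.commutatorElement_right ha₁y.inv_right
  have hb₁ : b₁ = 1 := r1 ▸ ha₁a₂.symm.inv_inv.commutator_eq
  have hx : x = 1 := by rw [r2, hb₁, inv_one, commutatorElement_one_left]
  have ha₁ : a₁ = 1 := by rw [r3, hb₁, commutatorElement_one_right]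
  have hb₂ : b₂ = 1 := by rw [r4, hb₁, commutatorElement_one_left]
  have ha₂ : a₂ = 1 := by rw [r5, hb₂, inv_one, commutatorElement_one_left]
  rw [hx, ha₁, hb₁, ha₂, hb₂] at hgen
  refine Subgroup.closure_eq_top_of_subset_closure hgen ?_
  simp only [Set.insert_subset_iff, Set.singleton_subset_iff, SetLike.mem_coe, one_mem,
    Subgroup.subset_closure (Set.mem_singleton y), and_self]

theorem stmt_5 {G : Type*} [Group G] (x y a₁ b₁ a₂ b₂ : G)
    (hgen : Subgroup.closure ({x, y, a₁, b₁, a₂, b₂} : Set G) = ⊤)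
    (h1 : ⁅b₁, b₂⁆ = 1) (h2 : ⁅a₁, b₂⁆ = 1) (h3 : ⁅b₁, a₁⁆ = 1) (h4 : ⁅b₂, a₂⁆ = 1)
    (h5 : ⁅x, a₁⁆ = 1) (h6 : ⁅y, a₁⁆ = 1) (h7 : ⁅x, a₂⁆ = 1) (h8 : ⁅y, a₂⁆ = 1)
    (r1 : b₁ = ⁅a₂⁻¹, a₁⁻¹⁆) (r2 : x = ⁅b₁⁻¹, y⁻¹⁆) (r3 : a₁ = ⁅x⁻¹, b₁⁆)
    (r4 : b₂ = ⁅b₁, a₂⁆) (r5 : a₂ = ⁅b₂⁻¹, y⁻¹⁆) :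
    Subgroup.closure ({y} : Set G) = ⊤ :=
  stmt_5_general x y a₁ b₁ a₂ b₂ hgen h2 h6 r1 r2 r3 r4 r5
end

section
/- Let G be a group generated by x, y, a₁, b₁, a₂, b₂ subject to the relations [b₁,b₂]=1, [a₁,b₂]=1, [b₁,a₁]=1, [b₂,a₂]=1, [x,a₁]=1, [y,a₁]=1, [x,a₂]=1, [y,a₂]=1, [x,y]=1, together with b₁ = [a₂⁻¹,a₁⁻¹], a₁ = [b₁⁻¹,y⁻¹], and b₂ = [b₁,a₂]. Then a₁ = 1, b₁ = 1, b₂ = 1, and G is abelian, generated by x, y, a₂. -/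
open scoped commutatorElement

theorem stmt_6 {G : Type*} [Group G] (x y a₁ b₁ a₂ b₂ : G)
    (hgen : Subgroup.closure ({x, y, a₁, b₁, a₂, b₂} : Set G) = ⊤)
    (h1 : ⁅b₁, b₂⁆ = 1) (h2 : ⁅a₁, b₂⁆ = 1) (h3 : ⁅b₁, a₁⁆ = 1) (h4 : ⁅b₂, a₂⁆ = 1)
    (h5 : ⁅x, a₁⁆ = 1) (h6 : ⁅y, a₁⁆ = 1) (h7 : ⁅x, a₂⁆ = 1) (h8 : ⁅y, a₂⁆ = 1)
    (h9 : ⁅x, y⁆ = 1)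
    (r1 : b₁ = ⁅a₂⁻¹, a₁⁻¹⁆) (r2 : a₁ = ⁅b₁⁻¹, y⁻¹⁆) (r3 : b₂ = ⁅b₁, a₂⁆) :
    a₁ = 1 ∧ b₁ = 1 ∧ b₂ = 1 ∧ Subgroup.closure ({x, y, a₂} : Set G) = ⊤ ∧
      ∀ g h : G, g * h = h * g := by
  rw [commutatorElement_eq_one_iff_commute] at h5 h6 h7 h8 h9
  -- y commutes with b₁
  have hyb : Commute y b₁ := by
    rw [r1, commutatorElement_def, inv_inv, inv_inv]
    exact ((h8.inv_right.mul_right h6.inv_right).mul_right h8).mul_right h6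
  have ha1 : a₁ = 1 := by
    rw [r2, commutatorElement_eq_one_iff_commute]
    exact hyb.symm.inv_inv
  have hb1 : b₁ = 1 := by
    rw [r1, ha1, commutatorElement_eq_one_iff_commute, inv_one]
    exact Commute.one_right _
  have hb2 : b₂ = 1 := by
    rw [r3, hb1, commutatorElement_eq_one_iff_commute]
    exact Commute.one_left _
  have hclos : Subgroup.closure ({x, y, a₂} : Set G) = ⊤ := by
    rw [eq_top_iff, ← hgen, Subgroup.closure_le]
    intro g hg
    simp only [Set.mem_insert_iff, Set.mem_singleton_iff] at hg
    rcases hg with rfl | rfl | rfl | rfl | rfl | rfl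
    · exact Subgroup.subset_closure (by simp)
    · exact Subgroup.subset_closure (by simp)
    · rw [ha1]; exact one_mem _
    · rw [hb1]; exact one_mem _
    · exact Subgroup.subset_closure (by simp)
    · rw [hb2]; exact one_mem _
  refine ⟨ha1, hb1, hb2, hclos, ?_⟩
  -- abelian: every element commutes with generators
  have key : ∀ g : G, ∀ s ∈ ({x, y, a₂} : Set G), Commute s g := by
    intro g s hs
    have hg : g ∈ Subgroup.closure ({x, y, a₂} : Set G) := by rw [hclos]; trivial
    induction hg using Subgroup.closure_induction with
    | mem z hz =>
      simp only [Set.mem_insert_iff, Set.mem_singleton_iff] at hs hz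
      rcases hs with rfl | rfl | rfl <;> rcases hz with rfl | rfl | rfl
      · exact Commute.refl _
      · exact h9
      · exact h7
      · exact h9.symm
      · exact Commute.refl _
      · exact h8
      · exact h7.symm
      · exact h8.symm
      · exact Commute.refl _
    | one => exact Commute.one_right _
    | mul u v _ _ hu hv => exact hu.mul_right hv
    | inv u _ hu => exact hu.inv_right
  intro g h
  have hg : g ∈ Subgroup.closure ({x, y, a₂} : Set G) := by rw [hclos]; trivial
  have : Commute g h := by
    induction hg using Subgroup.closure_induction with
    | mem z hz => exact key h z hz
    | one => exact Commute.one_left _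
    | mul u v _ _ hu hv => exact hu.mul_left hv
    | inv u _ hu => exact hu.inv_left
  exact this
end
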